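/- For all T ∈ ℤ and d ∈ ℤ, the map sending s = (b_1,…,b_M,d;T,M+1) with X = ∑_{m=1}^M b_m (so d = −T−X) to s̄ = (−b_M−1,…,−b_1−1,T+X;M−T,M+1) is a class-preserving bijection from S̄(T,M+1,d) onto S̄(M−T,M+1,−d), i.e., K(s̄) = K(s). In particular, for every k ∈ ℕ the number of states of class k in S̄(T,M+1,d) equals the number of states of class k in S̄(M−T,M+1,−d). -/

import Mathlib

open scoped Classical ENNReal
open Filter

namespace BDM

/-- Augmented BDM state set `S̄`: batteries `b 1, …, b M` (entries outside `{1,…,M}`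
are fixed to `0`), drain `d`, time residue `T`, ministep `t ∈ {1,…,M+1}`, and the
invariant `d + T + ∑ b_m = 0`. -/
structure St (M : ℕ) where
  b : ℕ → ℤ
  d : ℤ
  T : ℤ
  t : ℕ
  ht1 : 1 ≤ t
  ht2 : t ≤ M + 1
  hb0 : ∀ m, m = 0 ∨ M < m → b m = 0
  inv : d + T + ∑ m ∈ Finset.range M, b (m + 1) = 0

/-- Membership in the (restricted) state set `S`: `0 ≤ T ≤ M`. -/
def inS {M : ℕ} (s : St M) : Prop := 0 ≤ s.T ∧ s.T ≤ (M : ℤ)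

/-- The initial state `s₀ = (0,…,0,0;0,M+1)`. -/
def init (M : ℕ) : St M where
  b := fun _ => 0
  d := 0
  T := 0
  t := M + 1
  ht1 := Nat.le_add_left 1 M
  ht2 := le_refl _
  hb0 := fun _ _ => rfl
  inv := by simp

/-- The six actions of the BDM. -/
inductive Act : Type
  | D | I | Ne | Nl | dm | bp
deriving DecidableEq

/-- Feasible transitions of the BDM. -/
def Step {M : ℕ} (s : St M) : Act → St M → Prop
  | .D, s' => s.t ≤ M ∧ s.d < s.b s.t ∧ s'.t = s.t + 1 ∧ s'.T = s.T ∧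
      s'.d = s.b s.t ∧ s'.b = Function.update s.b s.t s.d
  | .I, s' => s.t ≤ M ∧ s.d < s.b s.t ∧ s'.t = s.t + 1 ∧ s'.T = s.T ∧
      s'.d = s.d ∧ s'.b = s.b
  | .Ne, s' => s.t ≤ M ∧ s.b s.t = s.d ∧ s'.t = s.t + 1 ∧ s'.T = s.T ∧
      s'.d = s.d ∧ s'.b = s.b
  | .Nl, s' => s.t ≤ M ∧ s.b s.t < s.d ∧ s'.t = s.t + 1 ∧ s'.T = s.T ∧
      s'.d = s.d ∧ s'.b = s.b
  | .dm, s' => s.t = M + 1 ∧ s.T < M ∧ s'.t = 1 ∧ s'.T = s.T + 1 ∧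
      s'.d = s.d - 1 ∧ s'.b = s.b
  | .bp, s' => s.t = M + 1 ∧ s.T = M ∧ s'.t = 1 ∧ s'.T = 0 ∧
      s'.d = s.d ∧ s'.b = fun m => if 1 ≤ m ∧ m ≤ M then s.b m + 1 else 0

/-- The `(M+1)`-tuple `(b_1,…,b_{t−1},d,b_t,…,b_M)` as a list. -/
def tuple {M : ℕ} (s : St M) : List ℤ :=
  ((List.range M).map (fun m => s.b (m + 1))).insertIdx (s.t - 1) s.d

/-- One transposition of adjacent entries of a list. -/
def AdjSwap (l l' : List ℤ) : Prop :=
  ∃ l₁ x y l₂, l = l₁ ++ x :: y :: l₂ ∧ l' = l₁ ++ y :: x :: l₂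

/-- The set of numbers `n` such that `l` can be sorted into nonincreasing order
by `n` transpositions of adjacent entries. -/
def SortCost (l : List ℤ) : Set ℕ :=
  {n | ∃ f : ℕ → List ℤ, f 0 = l ∧ (∀ i < n, AdjSwap (f i) (f (i + 1))) ∧
        (f n).Pairwise (· ≥ ·)}

/-- `π_l`: the minimal number of adjacent transpositions needed to sort `l`
into nonincreasing order. -/
noncomputable def piMin (l : List ℤ) : ℕ := sInf (SortCost l)

/-- The nonincreasing rearrangement of a list. -/
def sortedTuple (l : List ℤ) : List ℤ := l.insertionSort (· ≥ ·)

/-- The class `K(s) = −π_s + M·T + 2·∑_{m=1}^{M+1} b̃_m·(M+1−m)`. -/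
noncomputable def Kc {M : ℕ} (s : St M) : ℤ :=
  -(piMin (tuple s) : ℤ) + (M : ℤ) * s.T +
    2 * ∑ i ∈ Finset.range (M + 1), (sortedTuple (tuple s)).getD i 0 * ((M : ℤ) - i)

/-- The transition matrix `𝒯(s,s')` of the BDM, with values in `ℝ≥0∞`. -/
noncomputable def Tmat (M q : ℕ) (s s' : St M) : ℝ≥0∞ :=
  if Step s .D s' then ((q : ℝ≥0∞) - 1) / q
  else if Step s .I s' then 1 / q
  else if (Step s .Ne s' ∨ Step s .Nl s' ∨ Step s .dm s' ∨ Step s .bp s') then 1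
  else 0

/-- The state set `S` as a subtype. -/
def SS (M : ℕ) : Type := {s : St M // inS s}

/-- The mass distributions `μ_τ` on `S`: `μ_0` is the point mass at `s₀` and
`μ_{τ+1}(s') = ∑_{s∈S} 𝒯(s,s')·μ_τ(s)`. -/
noncomputable def mu (M q : ℕ) : ℕ → SS M → ℝ≥0∞
  | 0, s => if s.1 = init M then 1 else 0
  | τ + 1, s' => ∑' s : SS M, Tmat M q s.1 s'.1 * mu M q τ s

/-- The asymptotic measure `μ_∞(s) = limsup_{τ→∞} μ_τ(s)`. -/
noncomputable def muInf (M q : ℕ) (s : SS M) : ℝ≥0∞ :=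
  Filter.atTop.limsup (fun τ => mu M q τ s)

end BDM


namespace BDM

/-! ### Auxiliary machinery: inversion counts and pair sums -/

/-- Number of inversions w.r.t. nonincreasing order: pairs `i < j` with `l_i < l_j`. -/
def invCount : List ℤ → ℕ
  | [] => 0
  | a :: t => t.countP (fun x => decide (a < x)) + invCount t

/-- Pairs `i < j` with `l_i > l_j`. -/
def swapCount : List ℤ → ℕ
  | [] => 0
  | a :: t => t.countP (fun x => decide (x < a)) + swapCount t

/-- Sum over unordered pairs of the max. -/
def pairSum : List ℤ → ℤ
  | [] => 0
  | a :: t => (t.map (fun x => max a x)).sum + pairSum t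

lemma invCount_append_singleton (u : List ℤ) (a : ℤ) :
    invCount (u ++ [a]) = invCount u + u.countP (fun x => decide (x < a)) := by
  induction u with
  | nil => simp [invCount]
  | cons b u ih =>
    rw [List.cons_append]
    simp only [invCount, ih, List.countP_append, List.countP_cons, List.countP_nil]
    by_cases h : b < a <;> simp [h] <;> omega

lemma invCount_reverse (l : List ℤ) : invCount l.reverse = swapCount l := by
  induction l with
  | nil => rfl
  | cons a t ih =>
    rw [List.reverse_cons, invCount_append_singleton, ih, List.countP_reverse]
    simp [swapCount, Nat.add_comm]

lemma swapCount_map_neg (l : List ℤ) :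
    swapCount (l.map (fun x => -x - 1)) = invCount l := by
  induction l with
  | nil => rfl
  | cons a t ih =>
    simp only [List.map_cons, swapCount, ih, List.countP_map, invCount]
    congr 1
    apply List.countP_congr
    intro x hx
    simp only [Function.comp_apply, decide_eq_true_eq]
    omega

lemma invCount_sorted {l : List ℤ} (h : l.Pairwise (· ≥ ·)) : invCount l = 0 := by
  induction l with
  | nil => rfl
  | cons a t ih =>
    rw [List.pairwise_cons] at h
    have h1 : t.countP (fun x => decide (a < x)) = 0 :=
      List.countP_eq_zero.2 fun x hx => by simpa using not_lt.2 (h.1 x hx)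
    simp [invCount, h1, ih h.2]

lemma invCount_cons_cons (l₁ l₂ : List ℤ) (x y : ℤ) :
    invCount (l₁ ++ x :: y :: l₂) + (if y < x then 1 else 0)
      = invCount (l₁ ++ y :: x :: l₂) + (if x < y then 1 else 0) := by
  induction l₁ with
  | nil =>
    simp only [List.nil_append, invCount, List.countP_cons]
    by_cases h1 : x < y <;> by_cases h2 : y < x <;> simp [h1, h2] <;> omega
  | cons a l₁ ih =>
    simp only [List.cons_append, invCount, List.countP_append, List.countP_cons] at *
    by_cases h1 : a < x <;> by_cases h2 : a < y <;> simp [h1, h2] at * <;> omega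

lemma adjSwap_le {l l' : List ℤ} (h : AdjSwap l l') : invCount l ≤ invCount l' + 1 := by
  obtain ⟨l₁, x, y, l₂, rfl, rfl⟩ := h
  have := invCount_cons_cons l₁ l₂ x y
  by_cases h1 : x < y <;> by_cases h2 : y < x <;> simp [h1, h2] at this <;> omega

lemma sortCost_lower {l : List ℤ} {n : ℕ} (h : n ∈ SortCost l) : invCount l ≤ n := by
  obtain ⟨f, h0, hs, hsort⟩ := h
  have key : ∀ j, j ≤ n → invCount (f (n - j)) ≤ j := by
    intro j
    induction j with
    | zero => intro _; simp [invCount_sorted hsort]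
    | succ j ih =>
      intro hj
      have h1 : n - (j + 1) + 1 = n - j := by omega
      have h2 : n - (j + 1) < n := by omega
      have := adjSwap_le (hs _ h2)
      rw [h1] at this
      have := ih (by omega)
      omega
  have := key n le_rfl
  simpa [h0] using this

lemma exists_violation (l : List ℤ) :
    l.Pairwise (· ≥ ·) ∨ ∃ l₁ x y l₂, l = l₁ ++ x :: y :: l₂ ∧ x < y := by
  induction l with
  | nil => left; exact List.Pairwise.nil
  | cons a t ih =>
    rcases ih with hs | ⟨l₁, x, y, l₂, rfl, hxy⟩
    · match t, hs with
      | [], _ => left; simp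
      | b :: t', hs =>
        rcases le_or_gt b a with h | h
        · left
          rw [List.pairwise_cons]
          refine ⟨?_, hs⟩
          intro c hc
          rcases List.mem_cons.1 hc with rfl | hc
          · exact h
          · exact le_trans ((List.pairwise_cons.1 hs).1 c hc) h
        · right; exact ⟨[], a, b, t', rfl, h⟩
    · right; exact ⟨a :: l₁, x, y, l₂, rfl, hxy⟩

lemma sortCost_step {l l' : List ℤ} {n : ℕ} (h : AdjSwap l l') (hn : n ∈ SortCost l') :
    n + 1 ∈ SortCost l := by
  obtain ⟨f, h0, hs, hsort⟩ := hn
  refine ⟨fun i => if i = 0 then l else f (i - 1), by simp, ?_, by simp [hsort]⟩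
  intro i hi
  rcases Nat.eq_zero_or_pos i with rfl | hpos
  · simpa [h0] using h
  · show AdjSwap (if i = 0 then l else f (i - 1)) (if i + 1 = 0 then l else f (i + 1 - 1))
    rw [if_neg (by omega : ¬ i = 0), if_neg (by omega : ¬ i + 1 = 0)]
    have he : i + 1 - 1 = (i - 1) + 1 := by omega
    rw [he]
    exact hs _ (by omega)

lemma sortCost_upper (l : List ℤ) : invCount l ∈ SortCost l := by
  generalize hn : invCount l = n
  induction n using Nat.strong_induction_on generalizing l with
  | _ n ih =>
    rcases exists_violation l with hs | ⟨l₁, x, y, l₂, rfl, hxy⟩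
    · exact ⟨fun _ => l, rfl, fun i hi => by rw [invCount_sorted hs] at hn; omega, hn ▸ hs⟩
    · have hd := invCount_cons_cons l₁ l₂ x y
      rw [if_pos hxy, if_neg (by omega : ¬ y < x)] at hd
      set l' := l₁ ++ y :: x :: l₂ with hl'
      have hlt : invCount l' < n := by omega
      have := ih _ hlt l' rfl
      have h2 : n = invCount l' + 1 := by omega
      rw [h2]
      exact sortCost_step ⟨l₁, x, y, l₂, rfl, rfl⟩ this

lemma piMin_eq_invCount (l : List ℤ) : piMin l = invCount l := by
  apply le_antisymm
  · exact Nat.sInf_le (sortCost_upper l)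
  · exact le_csInf ⟨_, sortCost_upper l⟩ fun n hn => sortCost_lower hn

lemma pairSum_perm {l l' : List ℤ} (h : l.Perm l') : pairSum l = pairSum l' := by
  induction h with
  | nil => rfl
  | cons a h ih =>
    simp only [pairSum, ih, (h.map (fun x => max a x)).sum_eq]
  | swap x y t =>
    simp only [pairSum, List.map_cons, List.sum_cons]
    rw [max_comm]
    ring
  | trans h1 h2 ih1 ih2 => rw [ih1, ih2]

lemma sum_map_max_of_le {a : ℤ} {t : List ℤ} (h : ∀ x ∈ t, x ≤ a) :
    (t.map (fun x => max a x)).sum = a * t.length := by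
  induction t with
  | nil => simp
  | cons b t ih =>
    simp only [List.map_cons, List.sum_cons, List.length_cons]
    rw [max_eq_left (h b (by simp)), ih (fun x hx => h x (by simp [hx]))]
    push_cast
    ring

lemma pairSum_sorted {l : List ℤ} (h : l.Pairwise (· ≥ ·)) :
    pairSum l = ∑ i ∈ Finset.range l.length, l.getD i 0 * ((l.length : ℤ) - 1 - i) := by
  induction l with
  | nil => simp [pairSum]
  | cons a t ih =>
    rw [List.pairwise_cons] at h
    simp only [pairSum, List.length_cons]
    rw [sum_map_max_of_le h.1, ih h.2, Finset.sum_range_succ']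
    have : ∀ i ∈ Finset.range t.length,
        (a :: t).getD (i + 1) 0 * (((t.length + 1 : ℕ) : ℤ) - 1 - ((i + 1 : ℕ) : ℤ))
          = t.getD i 0 * ((t.length : ℤ) - 1 - i) := by
      intro i _
      simp only [List.getD_cons_succ]
      push_cast
      ring
    rw [Finset.sum_congr rfl this]
    simp only [List.getD_cons_zero]
    push_cast
    ring

lemma hmax_neg (a x : ℤ) : max (-a - 1) (-x - 1) = max a x - a - x - 1 := by
  rcases le_total a x with h | h
  · rw [max_eq_right h, max_eq_left (by omega : -x - 1 ≤ -a - 1)]; ring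
  · rw [max_eq_left h, max_eq_right (by omega : -a - 1 ≤ -x - 1)]; ring

lemma sum_map_max_neg (a : ℤ) (t : List ℤ) :
    (t.map (fun x => max (-a - 1) (-x - 1))).sum
      = (t.map (fun x => max a x)).sum - t.length * a - t.sum - t.length := by
  induction t with
  | nil => simp
  | cons b u ih =>
    simp only [List.map_cons, List.sum_cons, List.length_cons]
    rw [hmax_neg a b, ih]
    push_cast
    ring

lemma pairSum_map_neg (l : List ℤ) :
    pairSum (l.map (fun x => -x - 1)) =
      pairSum l - ((l.length : ℤ) - 1) * l.sum - (l.length.choose 2 : ℤ) := by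
  induction l with
  | nil => simp [pairSum]
  | cons a t ih =>
    simp only [List.map_cons, pairSum, ih, List.length_cons, List.sum_cons]
    rw [List.map_map]
    have : ((fun x => max (-a - 1) x) ∘ fun x => -x - 1) = fun x => max (-a - 1) (-x - 1) := rfl
    rw [this, sum_map_max_neg]
    have hch : ((t.length + 1).choose 2 : ℤ) = (t.length.choose 2 : ℤ) + t.length := by
      rw [Nat.choose_succ_succ, Nat.choose_one_right]
      push_cast
      ring
    rw [hch]
    push_cast
    ring

lemma sum_map_max_d (d : ℤ) (l : List ℤ) :
    (l.map (fun x => max (-d) (-x - 1))).sum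
      = (l.map (fun x => max d x)).sum - l.length * d - l.sum
        - (l.countP (fun x => decide (x < d)) : ℤ) := by
  induction l with
  | nil => simp
  | cons a t ih =>
    simp only [List.map_cons, List.sum_cons, List.length_cons, List.countP_cons]
    rw [ih]
    rcases lt_or_ge a d with h | h
    · rw [max_eq_right (by omega : -d ≤ -a - 1), max_eq_left (by omega : a ≤ d)]
      simp only [decide_eq_true h, if_true]
      push_cast
      ring
    · rw [max_eq_left (by omega : -a - 1 ≤ -d), max_eq_right h]
      simp only [decide_eq_false (not_lt.2 h), Bool.false_eq_true, if_false]
      push_cast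
      ring

lemma countP_neg_map (d : ℤ) (l : List ℤ) :
    (l.map (fun x => -x - 1)).countP (fun x => decide (x < -d))
      = l.countP (fun x => decide (d ≤ x)) := by
  rw [List.countP_map]
  apply List.countP_congr
  intro x _
  simp only [Function.comp_apply, decide_eq_true_eq]
  omega

lemma two_choose_two (n : ℕ) : 2 * (n.choose 2 : ℤ) = n * (n - 1) := by
  induction n with
  | zero => simp
  | succ n ih =>
    rw [Nat.choose_succ_succ, Nat.choose_one_right]
    push_cast
    push_cast at ih
    ring_nf
    ring_nf at ih
    omega

lemma sum_map_neg (l : List ℤ) : (l.map (fun x => -x - 1)).sum = -l.sum - l.length := by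
  induction l with
  | nil => simp
  | cons a t ih =>
    simp only [List.map_cons, List.sum_cons, List.length_cons, ih]
    push_cast
    ring

lemma key_list (M : ℕ) (Bl : List ℤ) (d T : ℤ) (hlen : Bl.length = M)
    (hinv : d + T + Bl.sum = 0) :
    -(invCount ((Bl.map (fun x => -x - 1)).reverse ++ [-d]) : ℤ)
        + M * ((M : ℤ) - T)
        + 2 * pairSum ((Bl.map (fun x => -x - 1)).reverse ++ [-d])
      = -(invCount (Bl ++ [d]) : ℤ) + M * T + 2 * pairSum (Bl ++ [d]) := by
  rw [invCount_append_singleton, invCount_append_singleton,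
    invCount_reverse, swapCount_map_neg, List.countP_reverse, countP_neg_map]
  have hp1 : pairSum (Bl ++ [d]) = (Bl.map (fun x => max d x)).sum + pairSum Bl := by
    rw [pairSum_perm (List.perm_append_singleton d Bl)]
    rfl
  have hp2 : pairSum ((Bl.map (fun x => -x - 1)).reverse ++ [-d])
      = (Bl.map (fun x => max (-d) (-x - 1))).sum + pairSum (Bl.map (fun x => -x - 1)) := by
    have hperm : ((Bl.map (fun x => -x - 1)).reverse ++ [-d]).Perm
        (-d :: Bl.map (fun x => -x - 1)) :=
      (List.perm_append_singleton _ _).trans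
        ((List.reverse_perm (Bl.map (fun x => -x - 1))).cons (-d))
    have hdef : pairSum (-d :: Bl.map (fun x => -x - 1))
        = ((Bl.map (fun x => -x - 1)).map (fun x => max (-d) x)).sum
          + pairSum (Bl.map (fun x => -x - 1)) := rfl
    rw [pairSum_perm hperm, hdef, List.map_map]
    rfl
  rw [hp1, hp2, sum_map_max_d, pairSum_map_neg]
  have hNK : (Bl.countP (fun x => decide (x < d)) : ℤ)
      + (Bl.countP (fun x => decide (d ≤ x)) : ℤ) = M := by
    have h1 : Bl.countP (fun x => decide (x < d))
        + Bl.countP (fun x => decide (d ≤ x)) = Bl.length := by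
      rw [List.length_eq_countP_add_countP (fun x => decide (x < d))]
      congr 1
      apply List.countP_congr
      intro x _
      simp [not_lt]
    rw [hlen] at h1
    exact_mod_cast h1
  have h2C : 2 * ((M).choose 2 : ℤ) = (M : ℤ) * ((M : ℤ) - 1) := two_choose_two M
  rw [hlen]
  push_cast
  linear_combination (-1 : ℤ) * hNK - h2C - 2 * (M : ℤ) * hinv

/-! ### State-level lemmas -/

lemma St.ext' {M : ℕ} {s1 s2 : St M} (hb : s1.b = s2.b) (hd : s1.d = s2.d)
    (hT : s1.T = s2.T) (ht : s1.t = s2.t) : s1 = s2 := by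
  cases s1; cases s2
  simp only at hb hd hT ht
  subst hb; subst hd; subst hT; subst ht
  rfl

lemma tuple_eq {M : ℕ} (s : St M) (ht : s.t = M + 1) :
    tuple s = ((List.range M).map (fun m => s.b (m + 1))) ++ [s.d] := by
  have h1 : s.t - 1 = ((List.range M).map fun m => s.b (m + 1)).length := by
    simp [ht]
  rw [tuple, h1, List.insertIdx_length_self]

/-- The antisymmetry map on states. -/
def flipSt {M : ℕ} (s : St M) : St M where
  b m := if 1 ≤ m ∧ m ≤ M then -(s.b (M + 1 - m)) - 1 else 0
  d := -s.d
  T := (M : ℤ) - s.T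
  t := M + 1
  ht1 := Nat.le_add_left 1 M
  ht2 := le_refl _
  hb0 := by
    intro m hm
    show (if 1 ≤ m ∧ m ≤ M then -(s.b (M + 1 - m)) - 1 else 0) = 0
    rw [if_neg]
    omega
  inv := by
    have h1 : ∀ m ∈ Finset.range M,
        (if 1 ≤ m + 1 ∧ m + 1 ≤ M then -(s.b (M + 1 - (m + 1))) - 1 else 0)
          = -(s.b (M - m)) - 1 := by
      intro m hm
      rw [Finset.mem_range] at hm
      rw [if_pos ⟨by omega, by omega⟩]
      have e : M + 1 - (m + 1) = M - m := by omega
      rw [e]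
    rw [Finset.sum_congr rfl h1]
    have h2 : ∑ m ∈ Finset.range M, (-(s.b (M - m)) - 1)
        = ∑ m ∈ Finset.range M, (-(s.b (m + 1)) - 1) := by
      rw [← Finset.sum_range_reflect (fun m => -(s.b (m + 1)) - 1) M]
      apply Finset.sum_congr rfl
      intro m hm
      rw [Finset.mem_range] at hm
      have : M - 1 - m + 1 = M - m := by omega
      rw [this]
    rw [h2, Finset.sum_sub_distrib]
    have h3 := s.inv
    have h4 : ∑ m ∈ Finset.range M, -(s.b (m + 1))
        = -∑ m ∈ Finset.range M, s.b (m + 1) := by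
      rw [Finset.sum_neg_distrib]
    rw [h4]
    simp only [Finset.sum_const, Finset.card_range, nsmul_eq_mul, mul_one]
    linarith

lemma flipSt_flipSt {M : ℕ} (s : St M) (ht : s.t = M + 1) : flipSt (flipSt s) = s := by
  apply St.ext'
  · funext m
    by_cases hm : 1 ≤ m ∧ m ≤ M
    · show (if 1 ≤ m ∧ m ≤ M then -((flipSt s).b (M + 1 - m)) - 1 else 0) = s.b m
      rw [if_pos hm]
      show -(if 1 ≤ M + 1 - m ∧ M + 1 - m ≤ M then -(s.b (M + 1 - (M + 1 - m))) - 1 else 0)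
          - 1 = s.b m
      rw [if_pos ⟨by omega, by omega⟩]
      have : M + 1 - (M + 1 - m) = m := by omega
      rw [this]
      ring
    · show (if 1 ≤ m ∧ m ≤ M then -((flipSt s).b (M + 1 - m)) - 1 else 0) = s.b m
      rw [if_neg hm, (s.hb0 m (by omega)).symm]
  · show -(-s.d) = s.d
    ring
  · show (M : ℤ) - ((M : ℤ) - s.T) = s.T
    ring
  · exact ht.symm

lemma tuple_flipSt {M : ℕ} (s : St M) :
    tuple (flipSt s)
      = (((List.range M).map (fun m => s.b (m + 1))).map (fun x => -x - 1)).reverse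
          ++ [-s.d] := by
  rw [tuple_eq (flipSt s) rfl]
  congr 1
  apply List.ext_getElem
  · simp
  · intro i h1 h2
    simp only [List.getElem_map, List.getElem_range, List.getElem_reverse, List.length_map,
      List.length_range] at h1 h2 ⊢
    show (if 1 ≤ i + 1 ∧ i + 1 ≤ M then -(s.b (M + 1 - (i + 1))) - 1 else 0) = _
    rw [if_pos ⟨by omega, by omega⟩]
    have hi : i < M := by simpa using h1
    have : M + 1 - (i + 1) = M - 1 - i + 1 := by omega
    rw [this]

lemma sortedSum (M : ℕ) (l : List ℤ) (hl : l.length = M + 1) :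
    ∑ i ∈ Finset.range (M + 1), (sortedTuple l).getD i 0 * ((M : ℤ) - i) = pairSum l := by
  have hs : (sortedTuple l).Pairwise (· ≥ ·) := List.pairwise_insertionSort _ _
  have hperm : (sortedTuple l).Perm l := List.perm_insertionSort _ _
  have hlen : (sortedTuple l).length = M + 1 := by
    rw [sortedTuple, List.length_insertionSort, hl]
  rw [← pairSum_perm hperm, pairSum_sorted hs, hlen]
  apply Finset.sum_congr rfl
  intro i _
  push_cast
  ring

lemma Kc_eq {M : ℕ} (s : St M) (hl : (tuple s).length = M + 1) :
    Kc s = -(invCount (tuple s) : ℤ) + (M : ℤ) * s.T + 2 * pairSum (tuple s) := by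
  rw [Kc, piMin_eq_invCount, sortedSum M _ hl]

lemma Kc_flipSt {M : ℕ} (s : St M) (ht : s.t = M + 1) : Kc (flipSt s) = Kc s := by
  set Bl := (List.range M).map (fun m => s.b (m + 1)) with hBl
  have hlenB : Bl.length = M := by simp [hBl]
  have h1 : tuple s = Bl ++ [s.d] := tuple_eq s ht
  have h2 : tuple (flipSt s) = (Bl.map (fun x => -x - 1)).reverse ++ [-s.d] :=
    tuple_flipSt s
  have hl1 : (tuple s).length = M + 1 := by rw [h1]; simp [hlenB]
  have hl2 : (tuple (flipSt s)).length = M + 1 := by rw [h2]; simp [hlenB]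
  rw [Kc_eq _ hl2, Kc_eq _ hl1, h1, h2]
  have hT' : (flipSt s).T = (M : ℤ) - s.T := rfl
  rw [hT']
  refine key_list M Bl s.d s.T hlenB ?_
  have : Bl.sum = ∑ m ∈ Finset.range M, s.b (m + 1) := rfl
  rw [this]
  exact s.inv

end BDM

open BDM in
/-- For all `T, d ∈ ℤ`, the map
`(b_1,…,b_M,d;T,M+1) ↦ (−b_M−1,…,−b_1−1,−d;M−T,M+1)` is a class-preserving
bijection from `S̄(T,M+1,d)` onto `S̄(M−T,M+1,−d)` (note `−d = T+X` where
`X = ∑ b_m`).  In particular, for every `k ∈ ℕ` the states of class `k` in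
`S̄(T,M+1,d)` are in bijection with those of class `k` in `S̄(M−T,M+1,−d)`. -/
theorem bdm_antisymmetry_bijection (M : ℕ) (hM : 1 ≤ M) (T d : ℤ) :
    ∃ e : {s : St M // s.T = T ∧ s.t = M + 1 ∧ s.d = d}
            ≃ {s : St M // s.T = (M : ℤ) - T ∧ s.t = M + 1 ∧ s.d = -d},
      (∀ s, ∀ m, 1 ≤ m → m ≤ M → (e s).1.b m = -(s.1.b (M + 1 - m)) - 1)
      ∧ (∀ s, Kc (e s).1 = Kc s.1)
      ∧ ∀ k : ℕ,
          Nonempty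
            ({s : {s : St M // s.T = T ∧ s.t = M + 1 ∧ s.d = d} // Kc s.1 = k}
              ≃ {s : {s : St M // s.T = (M : ℤ) - T ∧ s.t = M + 1 ∧ s.d = -d} //
                  Kc s.1 = k}) := by
  classical
  let e : {s : St M // s.T = T ∧ s.t = M + 1 ∧ s.d = d}
      ≃ {s : St M // s.T = (M : ℤ) - T ∧ s.t = M + 1 ∧ s.d = -d} :=
    { toFun := fun s => ⟨flipSt s.1, by
        obtain ⟨h1, h2, h3⟩ := s.2
        refine ⟨?_, rfl, ?_⟩
        · show (M : ℤ) - s.1.T = (M : ℤ) - T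
          rw [h1]
        · show -s.1.d = -d
          rw [h3]⟩
      invFun := fun s => ⟨flipSt s.1, by
        obtain ⟨h1, h2, h3⟩ := s.2
        refine ⟨?_, rfl, ?_⟩
        · show (M : ℤ) - s.1.T = T
          rw [h1]; ring
        · show -s.1.d = d
          rw [h3]; ring⟩
      left_inv := fun s => Subtype.ext (flipSt_flipSt s.1 s.2.2.1)
      right_inv := fun s => Subtype.ext (flipSt_flipSt s.1 s.2.2.1) }
  have hKe : ∀ s : {s : St M // s.T = T ∧ s.t = M + 1 ∧ s.d = d},
      Kc (e s).1 = Kc s.1 := fun s => Kc_flipSt s.1 s.2.2.1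
  refine ⟨e, ?_, hKe, ?_⟩
  · intro s m hm1 hm2
    show (if 1 ≤ m ∧ m ≤ M then -(s.1.b (M + 1 - m)) - 1 else 0) = _
    rw [if_pos ⟨hm1, hm2⟩]
  · intro k
    exact ⟨Equiv.subtypeEquiv e (fun a => by rw [hKe a])⟩
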